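/- Any finitely supported eigenfunction F: V → ℝ of the combinatorial Laplacian Δ_comb on the Kagome lattice has eigenvalue 3/2, and F is a finite linear combination of hexagon eigenfunctions F_H. -/

import Mathlib

open Complex

/-- `w₁ = 1`. -/
noncomputable def kagomeW₁ : ℂ := 1

/-- `w₂ = e^{iπ/3}`. -/
noncomputable def kagomeW₂ : ℂ := Complex.exp (Real.pi * Complex.I / 3)

/-- The vertex set of the Kagome lattice:
`V = (2ℤw₁+2ℤw₂) ∪ (w₁+2ℤw₁+2ℤw₂) ∪ (w₂+2ℤw₁+2ℤw₂) ⊂ ℂ`. -/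
def kagomeV : Set ℂ :=
  {v | ∃ m n : ℤ,
      v = 2 * (m : ℂ) * kagomeW₁ + 2 * (n : ℂ) * kagomeW₂ ∨
      v = kagomeW₁ + 2 * (m : ℂ) * kagomeW₁ + 2 * (n : ℂ) * kagomeW₂ ∨
      v = kagomeW₂ + 2 * (m : ℂ) * kagomeW₁ + 2 * (n : ℂ) * kagomeW₂}

/-- Adjacency in the Kagome lattice: two vertices at Euclidean distance `1`. -/
def kagomeAdj (v w : ℂ) : Prop :=
  v ∈ kagomeV ∧ w ∈ kagomeV ∧ ‖v - w‖ = 1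

/-- The combinatorial (normalized) Laplacian of the Kagome lattice:
`(Δ F)(v) = (1/deg v) ∑_{w∼v} (F(v) - F(w))`, where every vertex has degree `4`.
(The sum over the finitely many neighbours is expressed as a `tsum`.) -/
noncomputable def kagomeLap (F : ℂ → ℝ) (v : ℂ) : ℝ :=
  (1 / 4) * ∑' w : {w : ℂ // kagomeAdj v w}, (F v - F (w : ℂ))

/-- `w₀` is the centre of a hexagon of the Kagome lattice: its six prospective vertices
`w₀ + e^{kπi/3}`, `k = 0,…,5`, all belong to the lattice. -/
def IsHexCenter (w₀ : ℂ) : Prop :=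
  ∀ k : Fin 6, w₀ + Complex.exp (((k : ℕ) : ℂ) * Real.pi * Complex.I / 3) ∈ kagomeV

/-- The alternating `±1` function supported on the vertices of the hexagon with centre `w₀`:
`F_H(v) = (-1)^k` if `v = w₀ + e^{kπi/3}` and `0` otherwise. -/
noncomputable def hexFun (w₀ : ℂ) : ℂ → ℝ := fun v =>
  if h : ∃ k : Fin 6, v = w₀ + Complex.exp (((k : ℕ) : ℂ) * Real.pi * Complex.I / 3) then
    (-1 : ℝ) ^ ((h.choose : ℕ)) else 0

/-!
Write `x = (a, b)` for the point `a + b w₂` of the triangular lattice; the Kagome vertices are the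
points with `a` or `b` even, and the hexagon centres are the points with `a` and `b` both odd.
Every vertex lies in exactly one up-triangle `(2m, 2n), (2m+1, 2n), (2m, 2n+1)` and one
down-triangle `(2m, 2n), (2m-1, 2n), (2m, 2n-1)`, and its four neighbours are the other vertices
of these two triangles. Hence, if `Δ F = μ F`, the triangle sums `u` and `d` of `F` satisfy
`u(T) + d(T') = (6 - 4μ) F(v)` at every vertex `v = T ∩ T'`. Summing over a triangle shows that
`u` and `d` form an eigenfunction of the adjacency operator of the honeycomb lattice dual to the
triangles. A finitely supported such eigenfunction vanishes: at a lowest point of its support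
with respect to a generic height, one of the eigenvalue equations has a single nonzero term.
So all triangle sums vanish, which forces `(6 - 4μ) F = 0`, i.e. `μ = 3/2`.

A finitely supported function with vanishing triangle sums is a combination of the `F_H`: on its
top row `F` alternates in sign, so subtracting suitable multiples of the hexagons just below that
row clears it, and then also the odd row underneath; induct on the number of rows.
-/

theorem Submodule.exists_finset_sum_of_mem_span_image {R α ι : Type*} [Semiring R]
    {f : ι → α → R} {s : Set ι} {x : α → R} (hx : x ∈ span R (f '' s)) :
    ∃ (t : Finset ι) (c : ι → R), (∀ i ∈ t, i ∈ s) ∧ ∀ a, x a = ∑ i ∈ t, c i * f i a := by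
  obtain ⟨l, hl, rfl⟩ := (Finsupp.mem_span_image_iff_linearCombination R).1 hx
  refine ⟨l.support, l, fun i hi => (Finsupp.mem_supported R l).1 hl hi, fun a => ?_⟩
  simp [Finsupp.linearCombination_apply, Finsupp.sum, Finset.sum_apply]

namespace Kagome

open Submodule Set

/-! ### Lattice coordinates -/

noncomputable def latticePt (x : ℤ × ℤ) : ℂ := x.1 + x.2 * kagomeW₂

theorem kagomeW₂_eq : kagomeW₂ = 1 / 2 + (Real.sqrt 3 / 2 : ℝ) * I := by
  have h : (Real.pi : ℂ) * I / 3 = (Real.pi / 3 : ℝ) * I := by push_cast; ring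
  rw [kagomeW₂, h, exp_mul_I, ← ofReal_cos, ← ofReal_sin, Real.cos_pi_div_three,
    Real.sin_pi_div_three]
  push_cast
  ring

theorem kagomeW₂_sq : kagomeW₂ ^ 2 = kagomeW₂ - 1 := by
  have h3 : ((Real.sqrt 3 : ℝ) : ℂ) ^ 2 = 3 := by
    rw [← ofReal_pow, Real.sq_sqrt (by norm_num)]; norm_num
  rw [kagomeW₂_eq]
  push_cast
  linear_combination I ^ 2 / 4 * h3 + 3 / 4 * I_sq

theorem latticePt_re (x : ℤ × ℤ) : (latticePt x).re = x.1 + x.2 / 2 := by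
  simp [latticePt, kagomeW₂_eq, div_eq_mul_inv]

theorem latticePt_im (x : ℤ × ℤ) : (latticePt x).im = x.2 * (Real.sqrt 3 / 2) := by
  simp [latticePt, kagomeW₂_eq]

theorem latticePt_injective : Function.Injective latticePt := by
  intro x y h
  have h₂ : (x.2 : ℝ) = y.2 := by
    have := congrArg im h
    rw [latticePt_im, latticePt_im] at this
    exact mul_right_cancel₀ (by positivity) this
  have h₁ : (x.1 : ℝ) = y.1 := by
    have := congrArg re h
    rw [latticePt_re, latticePt_re] at this
    linarith
  exact Prod.ext (by exact_mod_cast h₁) (by exact_mod_cast h₂)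

@[simp]
theorem latticePt_inj {x y : ℤ × ℤ} : latticePt x = latticePt y ↔ x = y :=
  latticePt_injective.eq_iff

theorem latticePt_add (x y : ℤ × ℤ) : latticePt (x + y) = latticePt x + latticePt y := by
  simp only [latticePt, Prod.fst_add, Prod.snd_add, Int.cast_add]
  ring

theorem latticePt_sub (x y : ℤ × ℤ) : latticePt (x - y) = latticePt x - latticePt y := by
  simp only [latticePt, Prod.fst_sub, Prod.snd_sub, Int.cast_sub]
  ring

theorem norm_latticePt_eq_one_iff {x : ℤ × ℤ} :
    ‖latticePt x‖ = 1 ↔ x.1 * x.1 + x.1 * x.2 + x.2 * x.2 = 1 := by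
  have h3 : Real.sqrt 3 ^ 2 = 3 := Real.sq_sqrt (by norm_num)
  have hsq : normSq (latticePt x) = ((x.1 * x.1 + x.1 * x.2 + x.2 * x.2 : ℤ) : ℝ) := by
    rw [normSq_apply, latticePt_re, latticePt_im]
    push_cast
    linear_combination ((x.2 : ℝ) ^ 2 / 4) * h3
  rw [norm_def, Real.sqrt_eq_one, hsq]
  exact_mod_cast Iff.rfl

theorem eisenstein_norm_eq_one_iff {d e : ℤ} :
    d * d + d * e + e * e = 1 ↔
      (d = 1 ∧ e = 0) ∨ (d = -1 ∧ e = 0) ∨ (d = 0 ∧ e = 1) ∨ (d = 0 ∧ e = -1) ∨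
      (d = 1 ∧ e = -1) ∨ (d = -1 ∧ e = 1) := by
  constructor
  · intro h
    have hd : -1 ≤ d ∧ d ≤ 1 := by
      constructor <;> nlinarith [sq_nonneg (d + 2 * e), sq_nonneg (d - 1), sq_nonneg (d + 1)]
    have he : -1 ≤ e ∧ e ≤ 1 := by
      constructor <;> nlinarith [sq_nonneg (2 * d + e), sq_nonneg (e - 1), sq_nonneg (e + 1)]
    obtain ⟨hd₁, hd₂⟩ := hd
    obtain ⟨he₁, he₂⟩ := he
    interval_cases d <;> interval_cases e <;> omega
  · rintro (⟨rfl, rfl⟩ | ⟨rfl, rfl⟩ | ⟨rfl, rfl⟩ | ⟨rfl, rfl⟩ | ⟨rfl, rfl⟩ | ⟨rfl, rfl⟩) <;> rfl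

def IsKagomeCoord (x : ℤ × ℤ) : Prop := x.1 % 2 = 0 ∨ x.2 % 2 = 0

theorem IsKagomeCoord.exists_eq {x : ℤ × ℤ} (hx : IsKagomeCoord x) :
    ∃ m n : ℤ, x = (2 * m, 2 * n) ∨ x = (2 * m + 1, 2 * n) ∨ x = (2 * m, 2 * n + 1) := by
  refine ⟨x.1 / 2, x.2 / 2, ?_⟩
  simp only [Prod.ext_iff, IsKagomeCoord] at *
  omega

theorem mem_kagomeV_iff {v : ℂ} : v ∈ kagomeV ↔ ∃ x, IsKagomeCoord x ∧ v = latticePt x := by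
  have key : ∀ m n : ℤ, (v = 2 * (m : ℂ) * kagomeW₁ + 2 * (n : ℂ) * kagomeW₂ ∨
      v = kagomeW₁ + 2 * (m : ℂ) * kagomeW₁ + 2 * (n : ℂ) * kagomeW₂ ∨
      v = kagomeW₂ + 2 * (m : ℂ) * kagomeW₁ + 2 * (n : ℂ) * kagomeW₂) ↔
      (v = latticePt (2 * m, 2 * n) ∨ v = latticePt (2 * m + 1, 2 * n) ∨
        v = latticePt (2 * m, 2 * n + 1)) := by
    intro m n
    simp only [latticePt, kagomeW₁]
    push_cast
    ring_nf
  simp only [kagomeV, Set.mem_ofPred_eq, key]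
  constructor
  · rintro ⟨m, n, rfl | rfl | rfl⟩ <;> exact ⟨_, by simp [IsKagomeCoord], rfl⟩
  · rintro ⟨x, hx, rfl⟩
    obtain ⟨m, n, rfl | rfl | rfl⟩ := hx.exists_eq <;> exact ⟨m, n, by simp⟩

theorem latticePt_mem_kagomeV_iff {x : ℤ × ℤ} : latticePt x ∈ kagomeV ↔ IsKagomeCoord x := by
  simp [mem_kagomeV_iff]

theorem kagomeAdj_latticePt_iff {x y : ℤ × ℤ} :
    kagomeAdj (latticePt x) (latticePt y) ↔ IsKagomeCoord x ∧ IsKagomeCoord y ∧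
      (x - y).1 * (x - y).1 + (x - y).1 * (x - y).2 + (x - y).2 * (x - y).2 = 1 := by
  simp only [kagomeAdj, latticePt_mem_kagomeV_iff, ← latticePt_sub, norm_latticePt_eq_one_iff]

theorem kagomeLap_latticePt (F : ℂ → ℝ) {x : ℤ × ℤ} (N : Finset (ℤ × ℤ))
    (hN : ∀ y, kagomeAdj (latticePt x) (latticePt y) ↔ y ∈ N) :
    kagomeLap F (latticePt x) = 1 / 4 * ∑ y ∈ N, (F (latticePt x) - F (latticePt y)) := by
  have hset : {w | kagomeAdj (latticePt x) w} = ↑(N.map ⟨latticePt, latticePt_injective⟩) := by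
    ext w
    constructor
    · intro hw
      obtain ⟨y, -, rfl⟩ := mem_kagomeV_iff.1 hw.2.1
      simpa [← hN] using hw
    · simp only [Finset.coe_map, Function.Embedding.coeFn_mk, Set.mem_image, Finset.mem_coe]
      rintro ⟨y, hy, rfl⟩
      exact (hN y).2 hy
  rw [kagomeLap]
  congr 1
  refine (tsum_congr_set_coe (fun w => F (latticePt x) - F w) hset).trans ?_
  exact (Finset.tsum_subtype _ (fun w => F (latticePt x) - F w)).trans (Finset.sum_map _ _ _)

/-! ### Triangle sums and the honeycomb lattice -/

def upSum : (ℤ × ℤ → ℝ) →ₗ[ℝ] ℤ × ℤ → ℝ where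
  toFun g p := g (2 * p.1, 2 * p.2) + g (2 * p.1 + 1, 2 * p.2) + g (2 * p.1, 2 * p.2 + 1)
  map_add' f g := by ext; simp only [Pi.add_apply]; ring
  map_smul' c g := by ext; simp only [Pi.smul_apply, smul_eq_mul, RingHom.id_apply]; ring

def downSum : (ℤ × ℤ → ℝ) →ₗ[ℝ] ℤ × ℤ → ℝ where
  toFun g p := g (2 * p.1, 2 * p.2) + g (2 * p.1 - 1, 2 * p.2) + g (2 * p.1, 2 * p.2 - 1)
  map_add' f g := by ext; simp only [Pi.add_apply]; ring
  map_smul' c g := by ext; simp only [Pi.smul_apply, smul_eq_mul, RingHom.id_apply]; ring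

theorem upSum_apply (g : ℤ × ℤ → ℝ) (p : ℤ × ℤ) :
    upSum g p = g (2 * p.1, 2 * p.2) + g (2 * p.1 + 1, 2 * p.2) + g (2 * p.1, 2 * p.2 + 1) :=
  rfl

theorem downSum_apply (g : ℤ × ℤ → ℝ) (p : ℤ × ℤ) :
    downSum g p = g (2 * p.1, 2 * p.2) + g (2 * p.1 - 1, 2 * p.2) + g (2 * p.1, 2 * p.2 - 1) :=
  rfl

def upCorner (y : ℤ × ℤ) : ℤ × ℤ := (y.1 / 2, y.2 / 2)

def downCorner (y : ℤ × ℤ) : ℤ × ℤ := ((y.1 + 1) / 2, (y.2 + 1) / 2)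

theorem upSum_single {y : ℤ × ℤ} (hy : IsKagomeCoord y) :
    upSum (Pi.single y 1) = Pi.single (upCorner y) 1 := by
  ext q
  simp only [upSum_apply, Pi.single_apply, Prod.ext_iff, upCorner]
  unfold IsKagomeCoord at hy
  split_ifs <;> norm_num <;> omega

theorem downSum_single {y : ℤ × ℤ} (hy : IsKagomeCoord y) :
    downSum (Pi.single y 1) = Pi.single (downCorner y) 1 := by
  ext q
  simp only [downSum_apply, Pi.single_apply, Prod.ext_iff, downCorner]
  unfold IsKagomeCoord at hy
  split_ifs <;> norm_num <;> omega

theorem support_upSum_subset (g : ℤ × ℤ → ℝ) : (upSum g).support ⊆ upCorner '' g.support := by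
  intro p hp
  by_contra h
  have h' : ∀ a b, a / 2 = p.1 → b / 2 = p.2 → g (a, b) = 0 := fun a b ha hb =>
    not_not.1 fun hab => h ⟨(a, b), hab, Prod.ext ha hb⟩
  apply hp
  rw [upSum_apply, h' _ _ (by omega) (by omega), h' _ _ (by omega) (by omega),
    h' _ _ (by omega) (by omega), add_zero, add_zero]

theorem support_downSum_subset (g : ℤ × ℤ → ℝ) :
    (downSum g).support ⊆ downCorner '' g.support := by
  intro p hp
  by_contra h
  have h' : ∀ a b, (a + 1) / 2 = p.1 → (b + 1) / 2 = p.2 → g (a, b) = 0 := fun a b ha hb =>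
    not_not.1 fun hab => h ⟨(a, b), hab, Prod.ext ha hb⟩
  apply hp
  rw [downSum_apply, h' _ _ (by omega) (by omega), h' _ _ (by omega) (by omega),
    h' _ _ (by omega) (by omega), add_zero, add_zero]

structure TriangleEigen (g : ℤ × ℤ → ℝ) (κ : ℝ) : Prop where
  even_even : ∀ m n, upSum g (m, n) + downSum g (m, n) = κ * g (2 * m, 2 * n)
  odd_even : ∀ m n, upSum g (m, n) + downSum g (m + 1, n) = κ * g (2 * m + 1, 2 * n)
  even_odd : ∀ m n, upSum g (m, n) + downSum g (m, n + 1) = κ * g (2 * m, 2 * n + 1)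

theorem sum_neighbours_eq {F : ℂ → ℝ} {μ : ℝ} (heig : ∀ v ∈ kagomeV, kagomeLap F v = μ * F v)
    {x y₁ y₂ y₃ y₄ : ℤ × ℤ} (hx : IsKagomeCoord x := by unfold IsKagomeCoord; omega)
    (hN : ∀ y, kagomeAdj (latticePt x) (latticePt y) ↔ y ∈ ({y₁, y₂, y₃, y₄} : Finset _) := by
      intro y
      simp only [kagomeAdj_latticePt_iff, eisenstein_norm_eq_one_iff, IsKagomeCoord,
        Finset.mem_insert, Finset.mem_singleton, Prod.ext_iff, Prod.fst_sub, Prod.snd_sub]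
      omega)
    (h₁ : y₁ ∉ ({y₂, y₃, y₄} : Finset _) := by
      simp only [Finset.mem_insert, Finset.mem_singleton, Prod.ext_iff]; omega)
    (h₂ : y₂ ∉ ({y₃, y₄} : Finset _) := by
      simp only [Finset.mem_insert, Finset.mem_singleton, Prod.ext_iff]; omega)
    (h₃ : y₃ ≠ y₄ := by simp only [ne_eq, Prod.ext_iff]; omega) :
    F (latticePt y₁) + F (latticePt y₂) + F (latticePt y₃) + F (latticePt y₄) =
      (4 - 4 * μ) * F (latticePt x) := by
  have h := heig _ (latticePt_mem_kagomeV_iff.2 hx)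
  rw [kagomeLap_latticePt F _ hN, Finset.sum_insert h₁, Finset.sum_insert h₂,
    Finset.sum_pair h₃] at h
  linarith

theorem triangleEigen_of_kagomeLap {F : ℂ → ℝ} {μ : ℝ}
    (heig : ∀ v ∈ kagomeV, kagomeLap F v = μ * F v) :
    TriangleEigen (F ∘ latticePt) (6 - 4 * μ) := by
  refine ⟨fun m n => ?_, fun m n => ?_, fun m n => ?_⟩ <;>
    simp only [upSum_apply, downSum_apply, Function.comp_apply]
  · linarith [sum_neighbours_eq heig (x := (2 * m, 2 * n)) (y₁ := (2 * m + 1, 2 * n))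
      (y₂ := (2 * m - 1, 2 * n)) (y₃ := (2 * m, 2 * n + 1)) (y₄ := (2 * m, 2 * n - 1))]
  · have h := sum_neighbours_eq heig (x := (2 * m + 1, 2 * n)) (y₁ := (2 * m, 2 * n))
      (y₂ := (2 * m + 2, 2 * n)) (y₃ := (2 * m, 2 * n + 1)) (y₄ := (2 * m + 2, 2 * n - 1))
    ring_nf at h ⊢
    linarith
  · have h := sum_neighbours_eq heig (x := (2 * m, 2 * n + 1)) (y₁ := (2 * m, 2 * n))
      (y₂ := (2 * m + 1, 2 * n)) (y₃ := (2 * m, 2 * n + 2)) (y₄ := (2 * m - 1, 2 * n + 2))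
    ring_nf at h ⊢
    linarith

theorem honeycomb_eigenfunction_eq_zero {u d : ℤ × ℤ → ℝ} {c : ℝ}
    (hu : u.support.Finite) (hd : d.support.Finite)
    (hup : ∀ m n, d (m, n) + d (m + 1, n) + d (m, n + 1) = c * u (m, n))
    (hdown : ∀ m n, u (m, n) + u (m - 1, n) + u (m, n - 1) = c * d (m, n)) :
    u = 0 ∧ d = 0 := by
  set f : (ℤ × ℤ) ⊕ (ℤ × ℤ) → ℝ := Sum.elim u d
  suffices hf : ∀ x, f x = 0 from ⟨funext fun p => hf (.inl p), funext fun p => hf (.inr p)⟩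
  have hfin : f.support.Finite := ((hu.image Sum.inl).union (hd.image Sum.inr)).subset <| by
    rintro (p | p) hp
    exacts [Or.inl ⟨p, hp, rfl⟩, Or.inr ⟨p, hp, rfl⟩]
  -- three times the height `a + 3 b` of the centroid of the triangle
  let height : (ℤ × ℤ) ⊕ (ℤ × ℤ) → ℤ :=
    Sum.elim (fun p => 6 * p.1 + 18 * p.2 + 4) (fun p => 6 * p.1 + 18 * p.2 - 4)
  by_contra! ⟨x₀, hx₀⟩
  obtain ⟨x, hx, hmin⟩ := Set.exists_min_image f.support height hfin ⟨x₀, hx₀⟩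
  have below : ∀ y, height y < height x → f y = 0 := fun y hy =>
    not_not.1 fun h => (hmin y h).not_gt hy
  apply hx
  rcases x with ⟨m, n⟩ | ⟨m, n⟩
  · have h₁ := below (.inl (m - 1, n)) (by simp only [height, Sum.elim_inl]; omega)
    have h₂ := below (.inl (m, n - 1)) (by simp only [height, Sum.elim_inl]; omega)
    have h₃ := below (.inr (m, n)) (by simp only [height, Sum.elim_inl, Sum.elim_inr]; omega)
    simp only [f, Sum.elim_inl, Sum.elim_inr] at h₁ h₂ h₃ ⊢
    have h := hdown m n
    rw [h₁, h₂, h₃, mul_zero] at h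
    linarith
  · have h₁ := below (.inr (m, n - 1)) (by simp only [height, Sum.elim_inr]; omega)
    have h₂ := below (.inr (m + 1, n - 1)) (by simp only [height, Sum.elim_inr]; omega)
    have h₃ := below (.inl (m, n - 1)) (by simp only [height, Sum.elim_inl, Sum.elim_inr]; omega)
    simp only [f, Sum.elim_inl, Sum.elim_inr] at h₁ h₂ h₃ ⊢
    have h := hup m (n - 1)
    rw [sub_add_cancel, h₁, h₂, h₃, mul_zero] at h
    linarith

namespace TriangleEigen

variable {g : ℤ × ℤ → ℝ} {κ : ℝ}

theorem downSum_add (h : TriangleEigen g κ) (m n : ℤ) :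
    downSum g (m, n) + downSum g (m + 1, n) + downSum g (m, n + 1) =
      (κ - 3) * upSum g (m, n) := by
  have h₁ := h.even_even m n
  have h₂ := h.odd_even m n
  have h₃ := h.even_odd m n
  rw [upSum_apply] at *
  linarith

theorem upSum_add (h : TriangleEigen g κ) (m n : ℤ) :
    upSum g (m, n) + upSum g (m - 1, n) + upSum g (m, n - 1) = (κ - 3) * downSum g (m, n) := by
  have h₁ := h.even_even m n
  have h₂ := h.odd_even (m - 1) n
  have h₃ := h.even_odd m (n - 1)
  rw [sub_add_cancel] at h₂ h₃
  rw [downSum_apply] at *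
  ring_nf at *
  linarith

theorem upSum_eq_zero_and_downSum_eq_zero (h : TriangleEigen g κ) (hg : g.support.Finite) :
    upSum g = 0 ∧ downSum g = 0 :=
  honeycomb_eigenfunction_eq_zero ((hg.image _).subset (support_upSum_subset g))
    ((hg.image _).subset (support_downSum_subset g)) h.downSum_add h.upSum_add

theorem mul_eq_zero (h : TriangleEigen g κ) (hg : g.support.Finite) {x : ℤ × ℤ}
    (hx : IsKagomeCoord x) : κ * g x = 0 := by
  obtain ⟨hu, hd⟩ := h.upSum_eq_zero_and_downSum_eq_zero hg
  obtain ⟨m, n, rfl | rfl | rfl⟩ := hx.exists_eq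
  · simpa [hu, hd] using (h.even_even m n).symm
  · simpa [hu, hd] using (h.odd_even m n).symm
  · simpa [hu, hd] using (h.even_odd m n).symm

end TriangleEigen

/-! ### Hexagon functions -/

def hexCentre (p : ℤ × ℤ) : ℤ × ℤ := (2 * p.1 + 1, 2 * p.2 + 1)

def hexOffset : Fin 6 → ℤ × ℤ := ![(1, 0), (0, 1), (-1, 1), (-1, 0), (0, -1), (1, -1)]

def hex (p : ℤ × ℤ) : ℤ × ℤ → ℝ :=
  ∑ k : Fin 6, (-1 : ℝ) ^ (k : ℕ) • Pi.single (hexCentre p + hexOffset k) 1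

theorem hex_apply (p z : ℤ × ℤ) :
    hex p z = ∑ k : Fin 6, if z = hexCentre p + hexOffset k then (-1 : ℝ) ^ (k : ℕ) else 0 := by
  simp [hex, Finset.sum_apply, Pi.single_apply]

theorem not_isKagomeCoord_hexCentre (p : ℤ × ℤ) : ¬IsKagomeCoord (hexCentre p) := by
  simp only [IsKagomeCoord, hexCentre]
  omega

theorem isKagomeCoord_hexCentre_add (p : ℤ × ℤ) (k : Fin 6) :
    IsKagomeCoord (hexCentre p + hexOffset k) := by
  have : (hexOffset k).1 % 2 = 1 ∨ (hexOffset k).2 % 2 = 1 := by fin_cases k <;> decide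
  simp only [IsKagomeCoord, hexCentre, Prod.fst_add, Prod.snd_add]
  omega

theorem upSum_hex (p : ℤ × ℤ) : upSum (hex p) = 0 := by
  -- consecutive vertices of the hexagon, which carry opposite signs, share an up-triangle
  have hs : ∀ k, upSum (Pi.single (hexCentre p + hexOffset k) 1) =
      Pi.single (p + ![(1, 0), (0, 1), (0, 1), (0, 0), (0, 0), (1, 0)] k) 1 := fun k => by
    have h : upCorner ((1, 1) + hexOffset k) =
        ![(1, 0), (0, 1), (0, 1), (0, 0), (0, 0), (1, 0)] k := by
      revert k; decide
    rw [upSum_single (isKagomeCoord_hexCentre_add p k), ← h]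
    congr 1
    simp only [upCorner, hexCentre, Prod.ext_iff, Prod.fst_add, Prod.snd_add]
    omega
  rw [hex, map_sum]
  simp only [map_smul, hs, Fin.sum_univ_six, Matrix.cons_val]
  norm_num

theorem downSum_hex (p : ℤ × ℤ) : downSum (hex p) = 0 := by
  have hs : ∀ k, downSum (Pi.single (hexCentre p + hexOffset k) 1) =
      Pi.single (p + ![(1, 1), (1, 1), (0, 1), (0, 1), (1, 0), (1, 0)] k) 1 := fun k => by
    have h : downCorner ((1, 1) + hexOffset k) =
        ![(1, 1), (1, 1), (0, 1), (0, 1), (1, 0), (1, 0)] k := by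
      revert k; decide
    rw [downSum_single (isKagomeCoord_hexCentre_add p k), ← h]
    congr 1
    simp only [downCorner, hexCentre, Prod.ext_iff, Prod.fst_add, Prod.snd_add]
    omega
  rw [hex, map_sum]
  simp only [map_smul, hs, Fin.sum_univ_six, Matrix.cons_val]
  norm_num

theorem hex_hexCentre (p q : ℤ × ℤ) : hex p (hexCentre q) = 0 := by
  rw [hex_apply]
  refine Finset.sum_eq_zero fun k _ => if_neg fun h => ?_
  exact not_isKagomeCoord_hexCentre q (h ▸ isKagomeCoord_hexCentre_add p k)

theorem hex_eq_zero_of_snd {p z : ℤ × ℤ} (h : z.2 < 2 * p.2 ∨ 2 * p.2 + 2 < z.2) : hex p z = 0 := by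
  rw [hex_apply]
  refine Finset.sum_eq_zero fun k _ => if_neg fun hz => ?_
  have : -1 ≤ (hexOffset k).2 ∧ (hexOffset k).2 ≤ 1 := by fin_cases k <;> decide
  rw [hz] at h
  simp only [hexCentre, Prod.snd_add] at h
  omega

theorem hex_apply_top (a a' n : ℤ) :
    hex (a', n) (2 * a, 2 * (n + 1)) = if a' = a then 1 else 0 := by
  rw [hex_apply, Finset.sum_eq_single 2]
  · refine if_congr ?_ (by norm_num) rfl
    simp only [hexCentre, Prod.ext_iff, Prod.fst_add, Prod.snd_add,
      show hexOffset 2 = (-1, 1) from rfl]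
    omega
  · intro k _ hk
    have hoff : k ≠ 2 → (hexOffset k).2 = 1 → (hexOffset k).1 = 0 := by revert k; decide
    refine if_neg fun h => ?_
    have := hoff hk
    simp only [hexCentre, Prod.ext_iff, Prod.fst_add, Prod.snd_add] at h
    omega
  · simp

theorem support_hex_subset (p : ℤ × ℤ) :
    (hex p).support ⊆ Set.range fun k => hexCentre p + hexOffset k := by
  intro z hz
  rw [Function.mem_support, hex_apply] at hz
  obtain ⟨k, -, hk⟩ := Finset.exists_ne_zero_of_sum_ne_zero hz
  exact ⟨k, (not_not.1 fun h => hk (if_neg h)).symm⟩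

structure IsBalanced (g : ℤ × ℤ → ℝ) : Prop where
  finite_support : g.support.Finite
  apply_hexCentre : ∀ p, g (hexCentre p) = 0
  upSum_eq_zero : upSum g = 0
  downSum_eq_zero : downSum g = 0

def balanced : Submodule ℝ (ℤ × ℤ → ℝ) where
  carrier := {g | IsBalanced g}
  add_mem' {f g} hf hg :=
    ⟨(hf.finite_support.union hg.finite_support).subset (Function.support_add f g),
      fun p => by simp [hf.apply_hexCentre, hg.apply_hexCentre],
      by simp [hf.upSum_eq_zero, hg.upSum_eq_zero],
      by simp [hf.downSum_eq_zero, hg.downSum_eq_zero]⟩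
  zero_mem' := ⟨by simp, fun _ => rfl, map_zero _, map_zero _⟩
  smul_mem' c g hg :=
    ⟨hg.finite_support.subset (Function.support_const_smul_subset c g),
      fun p => by simp [hg.apply_hexCentre], by simp [hg.upSum_eq_zero],
      by simp [hg.downSum_eq_zero]⟩

theorem hex_mem_balanced (p : ℤ × ℤ) : hex p ∈ balanced :=
  ⟨(Set.finite_range _).subset (support_hex_subset p), hex_hexCentre p, upSum_hex p,
    downSum_hex p⟩

namespace IsBalanced

variable {g : ℤ × ℤ → ℝ}

theorem apply_right_up (hg : IsBalanced g) (m n : ℤ) :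
    g (2 * m + 1, 2 * n) = -(g (2 * m, 2 * n) + g (2 * m, 2 * n + 1)) := by
  have h := congrFun hg.upSum_eq_zero (m, n)
  rw [upSum_apply, Pi.zero_apply] at h
  linarith

theorem apply_left_down (hg : IsBalanced g) (m n : ℤ) :
    g (2 * m - 1, 2 * n) = -(g (2 * m, 2 * n) + g (2 * m, 2 * n - 1)) := by
  have h := congrFun hg.downSum_eq_zero (m, n)
  rw [downSum_apply, Pi.zero_apply] at h
  linarith

theorem apply_bottom_down (hg : IsBalanced g) (m n : ℤ) :
    g (2 * m, 2 * n - 1) = -(g (2 * m, 2 * n) + g (2 * m - 1, 2 * n)) := by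
  have h := congrFun hg.downSum_eq_zero (m, n)
  rw [downSum_apply, Pi.zero_apply] at h
  linarith

theorem eq_zero_above (hg : IsBalanced g) {n : ℤ}
    (htop : ∀ z : ℤ × ℤ, 2 * (n + 1) < z.2 → g z = 0) (heven : ∀ a, g (2 * a, 2 * (n + 1)) = 0) :
    ∀ z : ℤ × ℤ, 2 * n < z.2 → g z = 0 := by
  have hrow : ∀ a, g (a, 2 * (n + 1)) = 0 := by
    intro a
    obtain ⟨m, rfl | rfl⟩ : ∃ m, a = 2 * m ∨ a = 2 * m + 1 := ⟨a / 2, by omega⟩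
    · exact heven m
    · rw [hg.apply_right_up, heven, htop _ (by simp only; omega), add_zero, neg_zero]
  rintro ⟨a, b⟩ hb
  obtain hb | rfl | rfl : 2 * (n + 1) < b ∨ b = 2 * (n + 1) ∨ b = 2 * (n + 1) - 1 := by
    simp only at hb; omega
  · exact htop _ hb
  · exact hrow a
  · obtain ⟨m, rfl | rfl⟩ : ∃ m, a = 2 * m ∨ a = 2 * m + 1 := ⟨a / 2, by omega⟩
    · rw [hg.apply_bottom_down, hrow, hrow, add_zero, neg_zero]
    · rw [show 2 * (n + 1) - 1 = 2 * n + 1 by ring]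
      exact hg.apply_hexCentre (m, n)

theorem eq_zero_of_eq_zero_off_row (hg : IsBalanced g) {n : ℤ}
    (hoff : ∀ z : ℤ × ℤ, z.2 ≠ 2 * (n + 1) → g z = 0) : g = 0 := by
  -- along the row, `g` alternates in sign, so a leftmost nonzero entry is impossible
  have halt : ∀ a, g (a, 2 * (n + 1)) = -g (a - 1, 2 * (n + 1)) := by
    intro a
    obtain ⟨m, rfl | rfl⟩ : ∃ m, a = 2 * m ∨ a = 2 * m + 1 := ⟨a / 2, by omega⟩
    · rw [hg.apply_left_down, hoff (2 * m, 2 * (n + 1) - 1) (by simp only; omega)]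
      ring
    · rw [hg.apply_right_up, hoff (2 * m, 2 * (n + 1) + 1) (by simp only; omega),
        add_sub_cancel_right]
      ring
  have heven : ∀ a, g (2 * a, 2 * (n + 1)) = 0 := by
    have hfin : {a | g (a, 2 * (n + 1)) ≠ 0}.Finite :=
      hg.finite_support.preimage fun a _ b _ h => (Prod.mk.inj h).1
    by_contra! ⟨a₀, ha₀⟩
    obtain ⟨a, ha, hmin⟩ := exists_min_image _ id hfin ⟨2 * a₀, ha₀⟩
    have hprev : g (a - 1, 2 * (n + 1)) = 0 :=
      not_not.1 fun h => (hmin _ h).not_gt (sub_one_lt a)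
    exact ha (by rw [halt, hprev, neg_zero])
  funext z
  by_cases hz : z.2 ≤ 2 * n
  · exact hoff z (by omega)
  · exact hg.eq_zero_above (fun z hz => hoff z (by omega)) heven z (by omega)

theorem exists_sub_eq_zero_above (hg : IsBalanced g) {n : ℤ}
    (htop : ∀ z : ℤ × ℤ, 2 * (n + 1) < z.2 → g z = 0) :
    ∃ h ∈ span ℝ (range hex), (∀ z : ℤ × ℤ, z.2 < 2 * n → h z = 0) ∧
      ∀ z : ℤ × ℤ, 2 * n < z.2 → (g - h) z = 0 := by
  classical
  have hfin : {a | g (2 * a, 2 * (n + 1)) ≠ 0}.Finite :=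
    hg.finite_support.preimage fun a _ b _ h => by simpa using h
  set M := hfin.toFinset
  refine ⟨∑ a ∈ M, g (2 * a, 2 * (n + 1)) • hex (a, n),
    sum_mem fun a _ => smul_mem _ _ (subset_span ⟨_, rfl⟩), fun z hz => ?_, ?_⟩
  · rw [Finset.sum_apply]
    exact Finset.sum_eq_zero fun a _ => by
      rw [Pi.smul_apply, hex_eq_zero_of_snd (p := (a, n)) (Or.inl hz), smul_zero]
  have hsub : IsBalanced (g - ∑ a ∈ M, g (2 * a, 2 * (n + 1)) • hex (a, n)) :=
    balanced.sub_mem hg (sum_mem fun a _ => smul_mem _ _ (hex_mem_balanced _))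
  refine hsub.eq_zero_above (fun z hz => ?_) (fun a => ?_)
  · rw [Pi.sub_apply, htop z hz, Finset.sum_apply, zero_sub, neg_eq_zero]
    exact Finset.sum_eq_zero fun a _ => by
      rw [Pi.smul_apply, hex_eq_zero_of_snd (p := (a, n)) (Or.inr (by simp only; omega)),
        smul_zero]
  · simp only [Pi.sub_apply, Finset.sum_apply, Pi.smul_apply, smul_eq_mul, hex_apply_top,
      mul_ite, mul_one, mul_zero, Finset.sum_ite_eq', M, Set.Finite.mem_toFinset]
    split_ifs with ha
    · exact sub_self _
    · simpa using ha

end IsBalanced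

theorem balanced_le_span_hex : balanced ≤ span ℝ (range hex) := by
  suffices key : ∀ (k : ℕ) (n : ℤ) (g : ℤ × ℤ → ℝ), IsBalanced g →
      (∀ z : ℤ × ℤ, 2 * (n + 1) < z.2 → g z = 0) →
      (∀ z : ℤ × ℤ, z.2 < 2 * (n + 1) - 2 * k → g z = 0) → g ∈ span ℝ (range hex) by
    intro g hg
    obtain ⟨N, hN⟩ := (hg.finite_support.image fun z => |z.2|).bddAbove
    have hrow : ∀ z : ℤ × ℤ, N < |z.2| → g z = 0 := fun z hz =>
      not_not.1 fun h => hz.not_ge (hN ⟨z, h, rfl⟩)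
    refine key (2 * N + 2).toNat N g hg (fun z hz => hrow z ?_) (fun z hz => hrow z ?_) <;>
      rw [lt_abs] <;> omega
  intro k
  induction k with
  | zero =>
    intro n g hg htop hbot
    rw [hg.eq_zero_of_eq_zero_off_row fun z hz => (lt_or_gt_of_ne hz).elim
      (fun h => hbot z (by simpa using h)) (htop z)]
    exact zero_mem _
  | succ k ih =>
    intro n g hg htop hbot
    obtain ⟨h, hspan, hlow, hsub⟩ := hg.exists_sub_eq_zero_above htop
    have hgh : g - h ∈ span ℝ (range hex) := by
      refine ih (n - 1) (g - h) (balanced.sub_mem hg (span_le.2 ?_ hspan))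
        (fun z hz => hsub z (by omega)) (fun z hz => ?_)
      · rintro _ ⟨p, rfl⟩
        exact hex_mem_balanced p
      · rw [Pi.sub_apply, hbot z (by push_cast; omega), hlow z (by omega), sub_zero]
    simpa using add_mem hgh hspan

/-! ### Back to the Kagome lattice -/

theorem exp_hexAngle (k : Fin 6) :
    exp (((k : ℕ) : ℂ) * Real.pi * I / 3) = latticePt (hexOffset k) := by
  have hw := kagomeW₂_sq
  rw [show ((k : ℕ) : ℂ) * Real.pi * I / 3 = (k : ℕ) * (Real.pi * I / 3) by ring, exp_nat_mul,
    ← kagomeW₂]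
  fin_cases k
  · show kagomeW₂ ^ 0 = latticePt (1, 0)
    rw [latticePt]; push_cast; ring
  · show kagomeW₂ ^ 1 = latticePt (0, 1)
    rw [latticePt]; push_cast; ring
  · show kagomeW₂ ^ 2 = latticePt (-1, 1)
    rw [latticePt]; push_cast; linear_combination hw
  · show kagomeW₂ ^ 3 = latticePt (-1, 0)
    rw [latticePt]; push_cast; linear_combination (kagomeW₂ + 1) * hw
  · show kagomeW₂ ^ 4 = latticePt (0, -1)
    rw [latticePt]; push_cast; linear_combination (kagomeW₂ ^ 2 + kagomeW₂) * hw
  · show kagomeW₂ ^ 5 = latticePt (1, -1)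
    rw [latticePt]; push_cast; linear_combination (kagomeW₂ ^ 3 + kagomeW₂ ^ 2 - 1) * hw

theorem hexFun_apply (w₀ v : ℂ) :
    hexFun w₀ v = ∑ k : Fin 6,
      if v = w₀ + exp (((k : ℕ) : ℂ) * Real.pi * I / 3) then (-1 : ℝ) ^ (k : ℕ) else 0 := by
  have hinj : Function.Injective fun k : Fin 6 => exp (((k : ℕ) : ℂ) * Real.pi * I / 3) := by
    intro k l h
    simp only [exp_hexAngle, latticePt_inj] at h
    revert k l
    decide
  rw [hexFun]
  split_ifs with h
  · rw [Finset.sum_eq_single h.choose, if_pos h.choose_spec]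
    · exact fun k _ hk => if_neg fun hv => hk (hinj (add_left_cancel (hv.symm.trans h.choose_spec)))
    · simp
  · exact (Finset.sum_eq_zero fun k _ => if_neg fun hv => h ⟨k, hv⟩).symm

theorem hexFun_latticePt_hexCentre (p : ℤ × ℤ) :
    hexFun (latticePt (hexCentre p)) = Function.extend latticePt (hex p) 0 := by
  ext v
  simp only [hexFun_apply, exp_hexAngle, ← latticePt_add]
  by_cases hv : ∃ z, latticePt z = v
  · obtain ⟨z, rfl⟩ := hv
    simp [latticePt_injective.extend_apply, hex_apply]
  · rw [Function.extend_apply' _ _ _ hv, Pi.zero_apply]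
    exact Finset.sum_eq_zero fun k _ => if_neg fun h => hv ⟨_, h.symm⟩

theorem isHexCenter_latticePt_hexCentre (p : ℤ × ℤ) : IsHexCenter (latticePt (hexCentre p)) := by
  intro k
  rw [exp_hexAngle, ← latticePt_add, latticePt_mem_kagomeV_iff]
  exact isKagomeCoord_hexCentre_add p k

variable {F : ℂ → ℝ} {μ : ℝ}

theorem extend_comp_latticePt (hzero : ∀ v ∉ kagomeV, F v = 0) :
    Function.extend latticePt (F ∘ latticePt) 0 = F := by
  ext v
  by_cases hv : ∃ x, latticePt x = v
  · obtain ⟨x, rfl⟩ := hv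
    exact latticePt_injective.extend_apply (F ∘ latticePt) 0 x
  · rw [Function.extend_apply' _ _ _ hv, Pi.zero_apply]
    exact (hzero v fun h => hv <| (mem_kagomeV_iff.1 h).imp fun x hx => hx.2.symm).symm

theorem eigenvalue_eq_three_halves (hzero : ∀ v ∉ kagomeV, F v = 0) (hfin : F.support.Finite)
    (hne : F ≠ 0) (heig : ∀ v ∈ kagomeV, kagomeLap F v = μ * F v) : μ = 3 / 2 := by
  obtain ⟨v, hv⟩ := Function.ne_iff.1 hne
  obtain ⟨x, hx, rfl⟩ := mem_kagomeV_iff.1 (not_imp_comm.1 (hzero v) hv)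
  have h := (triangleEigen_of_kagomeLap heig).mul_eq_zero
    (hfin.preimage latticePt_injective.injOn) hx
  linarith [(mul_eq_zero.1 h).resolve_right hv]

theorem mem_span_hexFun (hzero : ∀ v ∉ kagomeV, F v = 0) (hfin : F.support.Finite)
    (heig : ∀ v ∈ kagomeV, kagomeLap F v = μ * F v) :
    F ∈ span ℝ (hexFun '' {w₀ | IsHexCenter w₀}) := by
  have hg : (F ∘ latticePt).support.Finite := hfin.preimage latticePt_injective.injOn
  obtain ⟨hu, hd⟩ := (triangleEigen_of_kagomeLap heig).upSum_eq_zero_and_downSum_eq_zero hg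
  have hbal : IsBalanced (F ∘ latticePt) :=
    ⟨hg, fun p => hzero _ (latticePt_mem_kagomeV_iff.not.2 (not_isKagomeCoord_hexCentre p)),
      hu, hd⟩
  have h := apply_mem_span_image_of_mem_span
    (Function.ExtendByZero.linearMap ℝ latticePt) (balanced_le_span_hex hbal)
  rw [← extend_comp_latticePt hzero]
  refine span_mono ?_ h
  rintro _ ⟨_, ⟨p, rfl⟩, rfl⟩
  exact ⟨_, isHexCenter_latticePt_hexCentre p, hexFun_latticePt_hexCentre p⟩

end Kagome

/-- Any finitely supported eigenfunction of the combinatorial Laplacian on the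
Kagome lattice has eigenvalue `3/2` and is a finite linear combination of hexagon
eigenfunctions `F_H`. -/
theorem finitely_supported_eigenfunction_classification
    (F : ℂ → ℝ) (hzero : ∀ v ∉ kagomeV, F v = 0)
    (hfin : (Function.support F).Finite) (hne : F ≠ 0)
    (μ : ℝ) (heig : ∀ v ∈ kagomeV, kagomeLap F v = μ * F v) :
    μ = 3 / 2 ∧
    ∃ (s : Finset ℂ) (c : ℂ → ℝ), (∀ w₀ ∈ s, IsHexCenter w₀) ∧
      ∀ v : ℂ, F v = ∑ w₀ ∈ s, c w₀ * hexFun w₀ v :=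
  ⟨Kagome.eigenvalue_eq_three_halves hzero hfin hne heig,
    Submodule.exists_finset_sum_of_mem_span_image (Kagome.mem_span_hexFun hzero hfin heig)⟩
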